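/- Let A be a strongly enforceable advice from s₀ with horizon H in a finite MDP M. Then for every path p of length ≤ H-1 from s₀ compatible with σ_A^H: σ_A^H(p) ≠ ∅, and an action a belongs to σ_A^H(p) if and only if τ_A^H(p,a) = Supp(P(last(p),a)). -/

import Mathlib

open Finset MeasureTheory Filter Asymptotics
open scoped BigOperators Classical ENNReal

noncomputable section

namespace PaperMCTS

variable {S A : Type}

/-- A (finite) Markov decision process: transition kernel `P`, reward `R`,
terminal reward `RT`. -/
structure MDP (S A : Type) where
  P : S → A → S → ℝ
  R : S → A → ℝ
  RT : S → ℝ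

/-- `P s a` is a probability distribution on states, for every `s, a`. -/
def MDP.IsProper [Fintype S] (M : MDP S A) : Prop :=
  (∀ s a s', 0 ≤ M.P s a s') ∧ ∀ s a, ∑ s', M.P s a s' = 1

/-- A path of length `i`: `i+1` states and `i` actions. -/
abbrev Path (S A : Type) (i : ℕ) : Type := (Fin (i + 1) → S) × (Fin i → A)

def Path.first {i : ℕ} (p : Path S A i) : S := p.1 0

def Path.lastState {i : ℕ} (p : Path S A i) : S := p.1 (Fin.last i)

/-- The prefix of length `j` of a path of length `i ≥ j`. -/
def Path.take {i : ℕ} (p : Path S A i) (j : ℕ) (h : j ≤ i) : Path S A j :=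
  (fun t => p.1 ⟨t, by have := t.isLt; omega⟩,
   fun t => p.2 ⟨t, by have := t.isLt; omega⟩)

/-- Extension of a path by one action and one state: `p · a s`. -/
def Path.snoc {i : ℕ} (p : Path S A i) (a : A) (s : S) : Path S A (i + 1) :=
  (fun t => if h : (t : ℕ) ≤ i then p.1 ⟨t, by omega⟩ else s,
   fun t => if h : (t : ℕ) < i then p.2 ⟨t, h⟩ else a)

/-- The path of length `0` at state `s`. -/
def constPath (s : S) : Path S A 0 := (fun _ => s, fun t => t.elim0)

/-- A path of the MDP: all stochastic steps have positive probability. -/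
def MDP.ValidPath (M : MDP S A) {i : ℕ} (p : Path S A i) : Prop :=
  ∀ t : Fin i, 0 < M.P (p.1 t.castSucc) (p.2 t) (p.1 t.succ)

/-- A (probabilistic) strategy maps every finite path to weights on actions. -/
def Strategy (S A : Type) : Type := ∀ i : ℕ, Path S A i → A → ℝ

def IsStrategy [Fintype A] (σ : Strategy S A) : Prop :=
  (∀ i p a, 0 ≤ σ i p a) ∧ ∀ i p, ∑ a, σ i p a = 1

/-- A strategy is deterministic if each of its distributions has singleton support. -/
def Deterministic (σ : Strategy S A) : Prop :=
  ∀ (i : ℕ) (p : Path S A i), ∃ a, ∀ b, (0 < σ i p b ↔ b = a)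

/-- Probability `Pr^i_{M,σ}(p) = ∏_t σ(p|_t)(a_t) · P(s_t,a_t)(s_{t+1})`. -/
def pathProb (M : MDP S A) (σ : Strategy S A) {i : ℕ} (p : Path S A i) : ℝ :=
  ∏ t : Fin i,
    σ t (Path.take p t t.isLt.le) (p.2 t) * M.P (p.1 t.castSucc) (p.2 t) (p.1 t.succ)

/-- Compatibility with a probabilistic strategy: all played actions are in the support. -/
def CompatStrat (σ : Strategy S A) {i : ℕ} (p : Path S A i) : Prop :=
  ∀ t : Fin i, 0 < σ t (Path.take p t t.isLt.le) (p.2 t)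

/-- Total reward of a path. -/
def pathReward (M : MDP S A) {i : ℕ} (p : Path S A i) : ℝ :=
  (∑ t : Fin i, M.R (p.1 t.castSucc) (p.2 t)) + M.RT (Path.lastState p)

/-- Expected total reward of strategy `σ` with horizon `i` from `s`. -/
def ValStrat [Fintype S] [Fintype A] (M : MDP S A) (σ : Strategy S A) (i : ℕ) (s : S) : ℝ :=
  ∑ p : Path S A i, if Path.first p = s then pathProb M σ p * pathReward M p else 0

/-- Optimal expected total reward of horizon `i` from `s`. -/
def MDP.Val [Fintype S] [Fintype A] (M : MDP S A) (i : ℕ) (s : S) : ℝ :=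
  ⨆ σ : {σ : Strategy S A // IsStrategy σ}, ValStrat M σ.1 i s

/-- Optimal actions: maximizers in the value-iteration recurrence (`opt^{k+1}`). -/
def MDP.optA [Fintype S] [Fintype A] (M : MDP S A) (k : ℕ) (s : S) : Set A :=
  {a | ∀ b, M.R s b + ∑ s', M.P s b s' * M.Val k s' ≤
        M.R s a + ∑ s', M.P s a s' * M.Val k s'}

/-- States of the depth-`H` tree unfolding: paths of length at most `H`. -/
abbrev UState (S A : Type) (H : ℕ) : Type := Σ i : Fin (H + 1), Path S A (i : ℕ)

def UState.root (H : ℕ) (s₀ : S) : UState S A H := ⟨⟨0, by omega⟩, constPath s₀⟩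

/-- Depth-`H` tree unfolding of an MDP (with self loops at the leaves). -/
def MDP.unfold (M : MDP S A) (H : ℕ) : MDP (UState S A H) A where
  P := fun q a q' =>
    if h : (q.1 : ℕ) < H then
      if q' = ⟨⟨(q.1 : ℕ) + 1, by omega⟩, Path.snoc q.2 a (Path.lastState q'.2)⟩ then
        M.P (Path.lastState q.2) a (Path.lastState q'.2)
      else 0
    else if q' = q then 1 else 0
  R := fun q a => if (q.1 : ℕ) < H then M.R (Path.lastState q.2) a else 0
  RT := fun q => M.RT (Path.lastState q.2)

/-- A symbolic advice: a predicate on finite paths. -/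
def Advice (S A : Type) : Type := ∀ i : ℕ, Path S A i → Prop

/-- A nondeterministic strategy. -/
def NStrategy (S A : Type) : Type := ∀ i : ℕ, Path S A i → Set A

/-- The nondeterministic strategy `σ_A^H` induced by an advice. -/
def advStrat (M : MDP S A) (Adv : Advice S A) (H : ℕ) : NStrategy S A := fun i p =>
  if h : i < H then
    {a | ∃ q : Path S A H, Adv H q ∧ Path.take q i h.le = p ∧ q.2 ⟨i, h⟩ = a ∧
      ∀ t : Fin H, i ≤ (t : ℕ) → 0 < M.P (q.1 t.castSucc) (q.2 t) (q.1 t.succ)}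
  else Set.univ

/-- The nondeterministic environment strategy `τ_A^H` induced by an advice. -/
def envStrat (M : MDP S A) (Adv : Advice S A) (H : ℕ) :
    ∀ i : ℕ, Path S A i → A → Set S := fun i p a =>
  if h : i < H then
    {s | 0 < M.P (Path.lastState p) a s ∧
      ∃ q : Path S A H, Adv H q ∧ Path.take q i h.le = p ∧ q.2 ⟨i, h⟩ = a ∧
        q.1 ⟨i + 1, by omega⟩ = s ∧
        ∀ t : Fin H, i ≤ (t : ℕ) → 0 < M.P (q.1 t.castSucc) (q.2 t) (q.1 t.succ)}
  else {s | 0 < M.P (Path.lastState p) a s}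

/-- Compatibility with a nondeterministic strategy. -/
def CompatN (σ : NStrategy S A) {i : ℕ} (p : Path S A i) : Prop :=
  ∀ t : Fin i, p.2 t ∈ σ t (Path.take p t t.isLt.le)

/-- Compatibility with a nondeterministic environment strategy. -/
def CompatE (τ : ∀ i : ℕ, Path S A i → A → Set S) {i : ℕ} (p : Path S A i) : Prop :=
  ∀ t : Fin i, p.1 t.succ ∈ τ t (Path.take p t t.isLt.le) (p.2 t)

/-- `FPaths^H_M(s₀, A)`: length-`H` paths of `M` from `s₀` satisfying the advice. -/
def FPathsAdv (M : MDP S A) (H : ℕ) (s₀ : S) (Adv : Advice S A) : Set (Path S A H) :=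
  {p | M.ValidPath p ∧ Path.first p = s₀ ∧ Adv H p}

/-- `FPaths^H_M(s₀, σ)` for a nondeterministic strategy. -/
def FPathsN (M : MDP S A) (H : ℕ) (s₀ : S) (σ : NStrategy S A) : Set (Path S A H) :=
  {p | M.ValidPath p ∧ Path.first p = s₀ ∧ CompatN σ p}

/-- `FPaths^H_M(s₀, τ)` for a nondeterministic environment strategy. -/
def FPathsE (M : MDP S A) (H : ℕ) (s₀ : S) (τ : ∀ i : ℕ, Path S A i → A → Set S) :
    Set (Path S A H) :=
  {p | M.ValidPath p ∧ Path.first p = s₀ ∧ CompatE τ p}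

/-- `σ` witnesses that `Adv` is strongly enforceable from `s₀` with horizon `H`. -/
def Enforces (M : MDP S A) (Adv : Advice S A) (s₀ : S) (H : ℕ) (σ : NStrategy S A) : Prop :=
  FPathsN M H s₀ σ = FPathsAdv M H s₀ Adv ∧
  ∀ (i : ℕ) (p : Path S A i), i < H → M.ValidPath p → Path.first p = s₀ →
    CompatN σ p → (σ i p).Nonempty

def StronglyEnforceable (M : MDP S A) (Adv : Advice S A) (s₀ : S) (H : ℕ) : Prop :=
  ∃ σ : NStrategy S A, Enforces M Adv s₀ H σ

/-- The pruned unfolding `T(M, s₀, H, A)`: transitions not compatible with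
`σ_A^H` or `τ_A^H` are removed. -/
def prunedUnfold (M : MDP S A) (Adv : Advice S A) (H : ℕ) : MDP (UState S A H) A where
  P := fun q a q' =>
    if (q.1 : ℕ) < H then
      if a ∈ advStrat M Adv H (q.1 : ℕ) q.2 ∧
          Path.lastState q'.2 ∈ envStrat M Adv H (q.1 : ℕ) q.2 a then
        (M.unfold H).P q a q'
      else 0
    else (M.unfold H).P q a q'
  R := (M.unfold H).R
  RT := (M.unfold H).RT

/-- The optimality assumption: every horizon-`H` optimal deterministic strategy is
contained in `σ_A^H`. -/
def OptAssumption [Fintype S] [Fintype A] (M : MDP S A) (Adv : Advice S A) (H : ℕ) : Prop :=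
  ∀ (s : S) (σ : Strategy S A), IsStrategy σ → Deterministic σ →
    ValStrat M σ H s = M.Val H s →
    ∀ (i : ℕ) (p : Path S A i) (a : A), 0 < σ i p a → a ∈ advStrat M Adv H i p

/-- Actions achievable as the first action of some (deterministic) strategy attaining
the optimal expected total reward of horizon `H` at `s`. -/
def optFirst {T : Type} [Fintype T] [Fintype A] (N : MDP T A) (H : ℕ) (s : T) : Set A :=
  {a | ∃ σ : Strategy T A, IsStrategy σ ∧ Deterministic σ ∧
    ValStrat N σ H s = N.Val H s ∧ 0 < σ 0 (constPath s) a}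

/-- All total rewards of paths of length at most `H` lie in `[0,1]`. -/
def BoundedRewards (M : MDP S A) (H : ℕ) : Prop :=
  ∀ (i : ℕ) (p : Path S A i), i ≤ H → pathReward M p ∈ Set.Icc (0 : ℝ) 1

/-- `WinsAux M T k i h p` says: from the node `p` (of depth `i = H - k`), the
alternation `∃a ∀s ∃a ∀s … ∀s_last` can force reaching a length-`H` path in `T`,
states being quantified over the support of the current transition. -/
def WinsAux (M : MDP S A) {H : ℕ} (T : Path S A H → Prop) :
    (k : ℕ) → (i : ℕ) → i + k = H → Path S A i → Prop
  | 0, i, h, p => T ((show i = H by omega) ▸ p)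
  | k + 1, i, h, p =>
      ∃ a : A, ∀ s : S, 0 < M.P (Path.lastState p) a s →
        WinsAux M T k (i + 1) (by omega) (Path.snoc p a s)

/-- `Adv'` is the strongly enforceable advice extracted from `Adv` (greatest
strongly enforceable advice below `Adv`, from `s₀` with horizon `H`). -/
def ExtractedFrom (M : MDP S A) (Adv Adv' : Advice S A) (s₀ : S) (H : ℕ) : Prop :=
  StronglyEnforceable M Adv' s₀ H ∧
  FPathsAdv M H s₀ Adv' ⊆ FPathsAdv M H s₀ Adv ∧
  ∀ Adv'' : Advice S A, StronglyEnforceable M Adv'' s₀ H →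
    FPathsAdv M H s₀ Adv'' ⊆ FPathsAdv M H s₀ Adv →
    FPathsAdv M H s₀ Adv'' ⊆ FPathsAdv M H s₀ Adv'

/-- Player 1 can enforce, from node `p` of depth `i`, that every continuation
following some deterministic action-selection `f` (against arbitrary stochastic
successors in the support) reaches the target set `T` of leaves. -/
def CanEnforce (M : MDP S A) {H : ℕ} (T : Set (Path S A H)) (i : ℕ) (hi : i ≤ H)
    (p : Path S A i) : Prop :=
  ∃ f : ∀ j : ℕ, Path S A j → A,
    ∀ q : Path S A H, Path.take q i hi = p →
      (∀ t : Fin H, i ≤ (t : ℕ) → q.2 t = f t (Path.take q t t.isLt.le)) →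
      (∀ t : Fin H, i ≤ (t : ℕ) → 0 < M.P (q.1 t.castSucc) (q.2 t) (q.1 t.succ)) →
      q ∈ T

/-- The advice whose satisfied length-`H` paths are exactly the paths to `T`
remaining within winning nodes. -/
def winAdvice (M : MDP S A) {H : ℕ} (T : Set (Path S A H)) : Advice S A :=
  fun j q => ∀ h : j = H, (h ▸ q) ∈ T ∧
    ∀ (t : ℕ) (ht : t ≤ H), CanEnforce M T t ht (Path.take (h ▸ q) t ht)

/-- The uniform strategy. -/
def uniformStrategy (S A : Type) [Fintype A] : Strategy S A :=
  fun _ _ _ => 1 / (Fintype.card A : ℝ)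

end PaperMCTS

end
namespace PaperMCTS
section Aux
variable {S A : Type}

lemma take_take {i : ℕ} (p : Path S A i) (j k : ℕ) (hj : j ≤ i) (hk : k ≤ j) :
    Path.take (Path.take p j hj) k hk = Path.take p k (hk.trans hj) := rfl

lemma take_self {i : ℕ} (p : Path S A i) : Path.take p i le_rfl = p := by
  refine Prod.ext (funext fun t => ?_) (funext fun t => ?_) <;>
    · show _ = _; congr 1

lemma take_fst {i : ℕ} (p : Path S A i) (j : ℕ) (hj : j ≤ i) (u : Fin (j + 1)) :
    (Path.take p j hj).1 u = p.1 ⟨u, by omega⟩ := rfl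

lemma take_snd {i : ℕ} (p : Path S A i) (j : ℕ) (hj : j ≤ i) (u : Fin j) :
    (Path.take p j hj).2 u = p.2 ⟨u, by omega⟩ := rfl

lemma first_take {i : ℕ} (p : Path S A i) (j : ℕ) (hj : j ≤ i) :
    Path.first (Path.take p j hj) = Path.first p := rfl

lemma take_snoc {i : ℕ} (p : Path S A i) (a : A) (s : S) :
    Path.take (Path.snoc p a s) i (Nat.le_succ i) = p := by
  refine Prod.ext (funext fun t => ?_) (funext fun t => ?_)
  · show (Path.snoc p a s).1 ⟨t, _⟩ = _
    simp only [Path.snoc]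
    rw [dif_pos (by omega : (t : ℕ) ≤ i)]
  · show (Path.snoc p a s).2 ⟨t, _⟩ = _
    simp only [Path.snoc]
    rw [dif_pos t.isLt]

lemma lastState_snoc {i : ℕ} (p : Path S A i) (a : A) (s : S) :
    Path.lastState (Path.snoc p a s) = s := by
  show (Path.snoc p a s).1 (Fin.last (i + 1)) = s
  simp only [Path.snoc, Fin.val_last]
  rw [dif_neg (by omega)]

lemma snoc_fst_last {i : ℕ} (p : Path S A i) (a : A) (s : S) :
    (Path.snoc p a s).1 ⟨i + 1, by omega⟩ = s := by
  simp only [Path.snoc]; rw [dif_neg (by omega)]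

lemma snoc_snd_last {i : ℕ} (p : Path S A i) (a : A) (s : S) :
    (Path.snoc p a s).2 ⟨i, by omega⟩ = a := by
  simp only [Path.snoc]; rw [dif_neg (by omega)]

lemma first_snoc {i : ℕ} (p : Path S A i) (a : A) (s : S) :
    Path.first (Path.snoc p a s) = Path.first p := by
  show (Path.snoc p a s).1 0 = p.1 0
  simp only [Path.snoc]; rw [dif_pos (by simp : ((0 : Fin (i+2)) : ℕ) ≤ i)]
  exact congrArg p.1 (Fin.ext (by simp))

lemma lastState_eq {i : ℕ} (p : Path S A i) : Path.lastState p = p.1 ⟨i, by omega⟩ := rfl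

lemma valid_take {M : MDP S A} {i : ℕ} {p : Path S A i} (hp : M.ValidPath p)
    (j : ℕ) (hj : j ≤ i) : M.ValidPath (Path.take p j hj) := by
  intro t
  have h := hp ⟨t, by omega⟩
  show 0 < M.P ((Path.take p j hj).1 _) ((Path.take p j hj).2 _) ((Path.take p j hj).1 _)
  rw [take_fst, take_fst, take_snd]
  convert h using 3 <;> exact Fin.ext (by simp)

lemma valid_snoc {M : MDP S A} {i : ℕ} {p : Path S A i} (hp : M.ValidPath p)
    {a : A} {s : S} (hs : 0 < M.P (Path.lastState p) a s) :
    M.ValidPath (Path.snoc p a s) := by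
  intro t
  by_cases h : (t : ℕ) < i
  · have h' := hp ⟨t, h⟩
    show 0 < M.P ((Path.snoc p a s).1 _) ((Path.snoc p a s).2 _) ((Path.snoc p a s).1 _)
    simp only [Path.snoc]
    rw [dif_pos (by simp; omega : ((t.castSucc : ℕ)) ≤ i),
        dif_pos (by simp; omega : ((t.succ : ℕ)) ≤ i), dif_pos (by simpa using h)]
    convert h' using 3 <;> exact Fin.ext (by simp)
  · have ht : (t : ℕ) = i := by omega
    show 0 < M.P ((Path.snoc p a s).1 _) ((Path.snoc p a s).2 _) ((Path.snoc p a s).1 _)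
    simp only [Path.snoc]
    rw [dif_pos (by simp [ht] : ((t.castSucc : ℕ)) ≤ i),
        dif_neg (by simp [ht] : ¬ ((t.succ : ℕ)) ≤ i), dif_neg (by omega)]
    have e : p.1 ⟨(t.castSucc : ℕ), by simp; omega⟩ = Path.lastState p := by
      rw [lastState_eq]; exact congrArg p.1 (Fin.ext (by simp [ht]))
    rw [e]; exact hs

lemma valid_of_take {M : MDP S A} {H i : ℕ} {q : Path S A H} {p : Path S A i}
    (hiH : i ≤ H) (hq : Path.take q i hiH = p) (hp : M.ValidPath p)
    (hsuf : ∀ t : Fin H, i ≤ (t : ℕ) → 0 < M.P (q.1 t.castSucc) (q.2 t) (q.1 t.succ)) :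
    M.ValidPath q := by
  intro t
  by_cases h : (t : ℕ) < i
  · have h' := hp ⟨t, h⟩
    rw [← hq] at h'
    show 0 < M.P (q.1 _) (q.2 _) (q.1 _)
    rw [take_fst, take_fst, take_snd] at h'
    convert h' using 3 <;> exact Fin.ext (by simp)
  · exact hsuf t (by omega)

lemma support_nonempty [Fintype S] {M : MDP S A} (hM : M.IsProper) (s : S) (a : A) :
    ∃ s', 0 < M.P s a s' := by
  by_contra h
  push_neg at h
  have h1 : ∑ s', M.P s a s' ≤ 0 := Finset.sum_nonpos fun s' _ => h s'
  rw [hM.2 s a] at h1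
  linarith

lemma compat_snoc {σ : NStrategy S A} {i : ℕ} {p : Path S A i}
    (hc : CompatN σ p) {a : A} {s : S} (ha : a ∈ σ i p) :
    CompatN σ (Path.snoc p a s) := by
  intro t
  by_cases h : (t : ℕ) < i
  · have h' := hc ⟨t, h⟩
    have e1 : (Path.snoc p a s).2 t = p.2 ⟨t, h⟩ := by
      simp only [Path.snoc]; rw [dif_pos h]
    have e2 : Path.take (Path.snoc p a s) (t : ℕ) t.isLt.le
        = Path.take p (t : ℕ) (by omega) := by
      rw [show Path.take (Path.snoc p a s) (t : ℕ) t.isLt.le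
            = Path.take (Path.take (Path.snoc p a s) i (Nat.le_succ i)) (t : ℕ) (by omega) from rfl,
          take_snoc]
    rw [e1, e2]
    exact h'
  · have ht : t = Fin.last i := Fin.ext (by simp; omega)
    subst ht
    have e1 : (Path.snoc p a s).2 (Fin.last i) = a := by
      simp only [Path.snoc]; rw [dif_neg (by simp)]
    rw [e1]
    show a ∈ σ ((Fin.last i : Fin (i+1)) : ℕ) _
    simp only [Fin.val_last]
    rw [take_snoc]
    exact ha

lemma compat_take {σ : NStrategy S A} {i : ℕ} {p : Path S A i}
    (hc : CompatN σ p) (j : ℕ) (hj : j ≤ i) : CompatN σ (Path.take p j hj) := by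
  intro t
  have h' := hc ⟨t, by omega⟩
  rw [take_snd, take_take]
  convert h' using 2

lemma extend_path [Fintype S] {M : MDP S A} (hM : M.IsProper) {Adv : Advice S A}
    {s₀ : S} {H : ℕ} {σ : NStrategy S A} (hE : Enforces M Adv s₀ H σ) :
    ∀ (k j : ℕ) (hj : j + k = H) (p : Path S A j), M.ValidPath p → Path.first p = s₀ →
      CompatN σ p →
      ∃ q : Path S A H, q ∈ FPathsN M H s₀ σ ∧ Path.take q j (by omega) = p := by
  intro k
  induction k with
  | zero =>
    intro j hj p hv h0 hc
    subst hj
    exact ⟨p, ⟨hv, h0, hc⟩, take_self p⟩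
  | succ k ih =>
    intro j hj p hv h0 hc
    obtain ⟨a, ha⟩ := hE.2 j p (by omega) hv h0 hc
    obtain ⟨s, hs⟩ := support_nonempty hM (Path.lastState p) a
    obtain ⟨q, hq, hqt⟩ := ih (j + 1) (by omega) (Path.snoc p a s)
      (valid_snoc hv hs) ((first_snoc p a s).trans h0) (compat_snoc hc ha)
    refine ⟨q, hq, ?_⟩
    rw [show Path.take q j (by omega) =
      Path.take (Path.take q (j+1) (by omega)) j (Nat.le_succ j) from rfl, hqt, take_snoc]

lemma compat_adv_to_sigma {M : MDP S A} {Adv : Advice S A} {s₀ : S} {H : ℕ}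
    {σ : NStrategy S A} (hE : Enforces M Adv s₀ H σ) {i : ℕ} (hiH : i ≤ H)
    {p : Path S A i} (hv : M.ValidPath p) (h0 : Path.first p = s₀)
    (hc : CompatN (advStrat M Adv H) p) : CompatN σ p := by
  intro t
  have htH : (t : ℕ) < H := by omega
  have h1 := hc t
  rw [advStrat, dif_pos htH] at h1
  obtain ⟨q, hAdv, hqt, hqa, hsuf⟩ := h1
  have hqv : M.ValidPath q :=
    valid_of_take htH.le hqt (valid_take hv _ _) hsuf
  have hq0 : Path.first q = s₀ := by
    have : Path.first (Path.take q (t : ℕ) htH.le) = Path.first q := first_take q _ _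
    rw [← this, hqt, first_take]; exact h0
  have hqm : q ∈ FPathsN M H s₀ σ := by
    rw [hE.1]; exact ⟨hqv, hq0, hAdv⟩
  have hcs := hqm.2.2 ⟨(t : ℕ), htH⟩
  rw [show (Path.take q (t:ℕ) (Fin.isLt ⟨(t:ℕ), htH⟩).le) = Path.take q (t:ℕ) htH.le from rfl,
      hqt] at hcs
  rwa [hqa] at hcs

end Aux
/-- on compatible paths, `σ_A^H` is nonempty and allows exactly the
actions whose environment strategy is the full support. -/
theorem enforceable_sigma_nonempty_iff [Fintype S] (M : MDP S A) (hM : M.IsProper)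
    (Adv : Advice S A) (s₀ : S) (H : ℕ) (hSE : StronglyEnforceable M Adv s₀ H)
    (i : ℕ) (hi : i < H) (p : Path S A i) (hp : M.ValidPath p)
    (hp0 : Path.first p = s₀) (hcomp : CompatN (advStrat M Adv H) p) :
    (advStrat M Adv H i p).Nonempty ∧
      ∀ a : A, a ∈ advStrat M Adv H i p ↔
        envStrat M Adv H i p a = {s | 0 < M.P (Path.lastState p) a s} := by
  obtain ⟨σ, hE⟩ := hSE
  have hcσ : CompatN σ p := compat_adv_to_sigma hE hi.le hp hp0 hcomp
  have adv_of_env : ∀ (a : A) (s : S), s ∈ envStrat M Adv H i p a →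
      a ∈ advStrat M Adv H i p := by
    intro a s hs
    rw [envStrat, dif_pos hi] at hs
    obtain ⟨-, q, h1, h2, h3, -, h5⟩ := hs
    rw [advStrat, dif_pos hi]
    exact ⟨q, h1, h2, h3, h5⟩
  have key : ∀ a : A, a ∈ σ i p → ∀ s : S, 0 < M.P (Path.lastState p) a s →
      s ∈ envStrat M Adv H i p a := by
    intro a ha s hs
    obtain ⟨q, hq, hqt⟩ := extend_path hM hE (H - (i + 1)) (i + 1) (by omega)
      (Path.snoc p a s) (valid_snoc hp hs) ((first_snoc p a s).trans hp0)
      (compat_snoc hcσ ha)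
    have hqAdv : q ∈ FPathsAdv M H s₀ Adv := by rw [← hE.1]; exact hq
    rw [envStrat, dif_pos hi]
    refine ⟨hs, q, hqAdv.2.2, ?_, ?_, ?_, fun t _ => hq.1 t⟩
    · rw [show Path.take q i hi.le
          = Path.take (Path.take q (i + 1) (by omega)) i (Nat.le_succ i) from rfl,
        hqt, take_snoc]
    · have e := congrArg (fun r : Path S A (i + 1) => r.2 ⟨i, Nat.lt_succ_self i⟩) hqt
      rw [take_snd, snoc_snd_last] at e
      exact e
    · have e := congrArg
        (fun r : Path S A (i + 1) => r.1 ⟨i + 1, Nat.lt_succ_self (i + 1)⟩) hqt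
      rw [take_fst, snoc_fst_last] at e
      exact e
  have aσ : ∀ a : A, a ∈ advStrat M Adv H i p → a ∈ σ i p := by
    intro a ha
    rw [advStrat, dif_pos hi] at ha
    obtain ⟨q, hAdv, hqt, hqa, hsuf⟩ := ha
    have hqv : M.ValidPath q := valid_of_take hi.le hqt hp hsuf
    have hq0 : Path.first q = s₀ := by
      rw [← first_take q i hi.le, hqt]; exact hp0
    have hqm : q ∈ FPathsN M H s₀ σ := by rw [hE.1]; exact ⟨hqv, hq0, hAdv⟩
    have hcs := hqm.2.2 ⟨i, hi⟩
    rw [show Path.take q ((⟨i, hi⟩ : Fin H) : ℕ) (Fin.isLt _).le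
        = Path.take q i hi.le from rfl, hqt] at hcs
    rwa [hqa] at hcs
  constructor
  · obtain ⟨a, ha⟩ := hE.2 i p hi hp hp0 hcσ
    obtain ⟨s, hs⟩ := support_nonempty hM (Path.lastState p) a
    exact ⟨a, adv_of_env a s (key a ha s hs)⟩
  · intro a
    constructor
    · intro ha
      ext s
      simp only [Set.mem_setOf_eq]
      constructor
      · intro hs
        rw [envStrat, dif_pos hi] at hs
        exact hs.1
      · intro hs
        exact key a (aσ a ha) s hs
    · intro h
      obtain ⟨s, hs⟩ := support_nonempty hM (Path.lastState p) a
      have : s ∈ envStrat M Adv H i p a := by rw [h]; exact hs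
      exact adv_of_env a s this
end PaperMCTS
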